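/- arXiv:1403.3705 — 5 statements merged into one kernel-verified Lean document; each statement's English description precedes it below -/
import Mathlib

section
/- For every natural number N, the connected components of the space {x : Fin N → ℝ | Function.Injective x} of ordered configurations of N distinct points on the line are exactly the sets C_σ := {x : Fin N → ℝ | StrictMono (x ∘ σ)} for σ ∈ S_N; that is, each C_σ is a connected component, distinct permutations σ ≠ τ give disjoint sets C_σ ∩ C_τ = ∅ (so for N ≥ 1 there are exactly N! components), and the union of all C_σ equals the whole space of injective tuples. -/
/-!
Call the set of tuples `x` with `x ∘ σ` strictly increasing the chamber of `σ`. Each chamber is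
cut out by finitely many strict linear inequalities, so it is open and convex, hence connected.
Sorting shows that the chambers cover the injective tuples, and the sorting permutation of a
tuple with distinct entries is unique, so the chambers are pairwise disjoint. In a cover by
pairwise disjoint open connected sets the pieces are exactly the connected components, and the
chambers are nonempty, so there are `N!` components.
-/

open Set Function

section DisjointOpenCover

variable {X ι : Type*} [TopologicalSpace X] {U : ι → Set X} {S : Set X}

theorem connectedComponentIn_eq_of_iUnion_eq (hopen : ∀ i, IsOpen (U i))
    (hconn : ∀ i, IsPreconnected (U i)) (hdisj : Pairwise (Disjoint on U)) (hS : ⋃ i, U i = S)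
    {i : ι} {x : X} (hx : x ∈ U i) : connectedComponentIn S x = U i := by
  have hUS : ∀ j, U j ⊆ S := fun j => hS ▸ subset_iUnion U j
  refine Subset.antisymm ?_ ((hconn i).subset_connectedComponentIn hx (hUS i))
  have hcover : connectedComponentIn S x ⊆ U i ∪ ⋃ (j) (_ : j ≠ i), U j := by
    intro y hy
    obtain ⟨j, hyj⟩ := mem_iUnion.1 (hS.symm ▸ connectedComponentIn_subset S x hy)
    by_cases hji : j = i
    · exact Or.inl (hji ▸ hyj)
    · exact Or.inr (mem_biUnion hji hyj)
  exact isPreconnected_connectedComponentIn.subset_left_of_subset_union (hopen i)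
    (isOpen_biUnion fun j _ => hopen j)
    (disjoint_iUnion₂_right.2 fun j hji => hdisj (Ne.symm hji)) hcover
    ⟨x, mem_connectedComponentIn (hUS i hx), hx⟩

theorem ConnectedComponents.mk_eq_mk_iff_connectedComponentIn_eq {x y : S} :
    ConnectedComponents.mk x = ConnectedComponents.mk y ↔
      connectedComponentIn S x = connectedComponentIn S y := by
  rw [ConnectedComponents.coe_eq_coe, connectedComponentIn_eq_image x.2,
    connectedComponentIn_eq_image y.2, (image_injective.2 Subtype.val_injective).eq_iff]

theorem nat_card_connectedComponents_eq_of_iUnion_eq (hopen : ∀ i, IsOpen (U i))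
    (hconn : ∀ i, IsPreconnected (U i)) (hdisj : Pairwise (Disjoint on U)) (hS : ⋃ i, U i = S)
    {p : ι → X} (hp : ∀ i, p i ∈ U i) :
    Nat.card (ConnectedComponents S) = Nat.card ι := by
  have hpS : ∀ i, p i ∈ S := fun i => hS ▸ mem_iUnion_of_mem i (hp i)
  have hcomp := fun {i} {x} (hx : x ∈ U i) =>
    connectedComponentIn_eq_of_iUnion_eq hopen hconn hdisj hS hx
  refine (Nat.card_eq_of_bijective (fun i => ConnectedComponents.mk ⟨p i, hpS i⟩)
    ⟨?_, ?_⟩).symm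
  · intro i j hij
    rw [ConnectedComponents.mk_eq_mk_iff_connectedComponentIn_eq, hcomp (hp i), hcomp (hp j)] at hij
    exact hdisj.eq (not_disjoint_iff.2 ⟨p i, hp i, hij ▸ hp i⟩)
  · rintro ⟨x, hx⟩
    obtain ⟨i, hxi⟩ := mem_iUnion.1 (hS.symm ▸ hx)
    exact ⟨i, ConnectedComponents.mk_eq_mk_iff_connectedComponentIn_eq.2
      (by rw [hcomp (hp i), hcomp hxi])⟩

end DisjointOpenCover

namespace OrderedConfiguration

variable {N : ℕ} {α : Type*}

def chamber [LinearOrder α] (σ : Equiv.Perm (Fin N)) : Set (Fin N → α) :=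
  {x | StrictMono (x ∘ σ)}

section LinearOrder

variable [LinearOrder α] {σ τ : Equiv.Perm (Fin N)} {x : Fin N → α}

theorem injective_of_mem_chamber (hx : x ∈ chamber σ) : Injective x := by
  simpa using hx.injective.comp σ.symm.injective

theorem exists_mem_chamber (hx : Injective x) : ∃ σ, x ∈ chamber σ :=
  ⟨Tuple.sort x,
    (Tuple.monotone_sort x).strictMono_of_injective (hx.comp (Tuple.sort x).injective)⟩

theorem iUnion_chamber :
    ⋃ σ : Equiv.Perm (Fin N), chamber σ = {x : Fin N → α | Injective x} :=
  Subset.antisymm (iUnion_subset fun _ _ => injective_of_mem_chamber)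
    fun _ hx => mem_iUnion.2 (exists_mem_chamber hx)

theorem eq_of_mem_chamber_of_mem_chamber (hσ : x ∈ chamber σ) (hτ : x ∈ chamber τ) :
    σ = τ := by
  have hrange : range (x ∘ σ) = range (x ∘ τ) := by
    rw [range_comp, range_comp, σ.range_eq_univ, τ.range_eq_univ]
  have hcomp : x ∘ σ = x ∘ τ := (hσ.range_inj hτ).1 hrange
  exact Equiv.ext fun i => injective_of_mem_chamber hσ (congrFun hcomp i)

theorem pairwise_disjoint_chamber :
    Pairwise (Disjoint on (chamber : Equiv.Perm (Fin N) → Set (Fin N → α))) :=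
  fun _ _ hne => disjoint_left.2 fun _ hσ hτ => hne (eq_of_mem_chamber_of_mem_chamber hσ hτ)

end LinearOrder

theorem symm_mem_chamber {R : Type*} [Semiring R] [LinearOrder R] [IsStrictOrderedRing R]
    (σ : Equiv.Perm (Fin N)) : (fun i => ((σ.symm i : ℕ) : R)) ∈ chamber σ := by
  intro i j hij
  simpa using hij

theorem isOpen_chamber [LinearOrder α] [TopologicalSpace α] [OrderClosedTopology α]
    (σ : Equiv.Perm (Fin N)) :
    IsOpen (chamber σ : Set (Fin N → α)) := by
  simp only [chamber, StrictMono, ofPred_forall]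
  exact isOpen_iInter_of_finite fun i => isOpen_iInter_of_finite fun j => isOpen_iInter_of_finite
    fun _ => isOpen_lt (continuous_apply _) (continuous_apply _)

theorem convex_chamber {𝕜 : Type*} [Field 𝕜] [LinearOrder 𝕜] [IsStrictOrderedRing 𝕜]
    (σ : Equiv.Perm (Fin N)) :
    Convex 𝕜 (chamber σ : Set (Fin N → 𝕜)) := by
  simp only [chamber, StrictMono, ofPred_forall]
  refine convex_iInter fun i => convex_iInter fun j => convex_iInter fun _ => ?_
  have hlin : IsLinearMap 𝕜 fun x : Fin N → 𝕜 => x (σ i) - x (σ j) :=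
    (LinearMap.proj (R := 𝕜) (φ := fun _ : Fin N => 𝕜) (σ i) -
      LinearMap.proj (σ j)).isLinear
  simpa only [sub_neg, comp_apply] using convex_halfSpace_lt hlin 0

end OrderedConfiguration

open OrderedConfiguration in
/-- The connected components of the space of ordered configurations of `N` distinct points
on the line `ℝ` are exactly the chambers `C_σ = {x | StrictMono (x ∘ σ)}` for `σ ∈ S_N`:
each `C_σ` is the connected component (within the injective tuples) of each of its points,
distinct permutations give disjoint chambers (so for `N ≥ 1` there are exactly `N!`
components), and the chambers cover the space of injective tuples. -/
theorem stmt_4 (N : ℕ) :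
    (∀ σ : Equiv.Perm (Fin N), ∀ x ∈ {x : Fin N → ℝ | StrictMono (x ∘ ⇑σ)},
      connectedComponentIn {x : Fin N → ℝ | Function.Injective x} x
        = {x : Fin N → ℝ | StrictMono (x ∘ ⇑σ)}) ∧
    (∀ σ τ : Equiv.Perm (Fin N), σ ≠ τ →
      {x : Fin N → ℝ | StrictMono (x ∘ ⇑σ)} ∩ {x : Fin N → ℝ | StrictMono (x ∘ ⇑τ)} = ∅) ∧
    (1 ≤ N →
      Nat.card (ConnectedComponents {x : Fin N → ℝ // Function.Injective x}) = N.factorial) ∧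
    (⋃ σ : Equiv.Perm (Fin N), {x : Fin N → ℝ | StrictMono (x ∘ ⇑σ)})
      = {x : Fin N → ℝ | Function.Injective x} := by
  have hcover := iUnion_chamber (N := N) (α := ℝ)
  have hconn : ∀ σ, IsPreconnected (chamber σ : Set (Fin N → ℝ)) :=
    fun σ => (convex_chamber σ).isPreconnected
  have hcard := nat_card_connectedComponents_eq_of_iUnion_eq isOpen_chamber hconn
    pairwise_disjoint_chamber hcover symm_mem_chamber
  rw [Nat.card_perm, Nat.card_fin] at hcard
  exact ⟨fun σ x hx => connectedComponentIn_eq_of_iUnion_eq isOpen_chamber hconn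
      pairwise_disjoint_chamber hcover hx,
    fun σ τ hne => (pairwise_disjoint_chamber hne).inter_eq, fun _ => hcard, hcover⟩
end

section
/- Let N ≥ 2 and d ≥ 3. Every smooth (infinitely differentiable) anti-symmetric function ψ : (Fin N → (Fin d → ℝ)) → ℂ has a node outside the diagonal: there exists an injective tuple x : Fin N → (Fin d → ℝ) with ψ(x) = 0. -/
set_option maxHeartbeats 1000000

open MeasureTheory intervalIntegral

private lemma exp_integral_logDeriv {f u : ℝ → ℂ} (hf : ∀ t, HasDerivAt f (u t) t)
    (hu : Continuous u) (hne : ∀ t, f t ≠ 0) (T : ℝ) :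
    Complex.exp (∫ t in (0:ℝ)..T, u t / f t) * f 0 = f T := by
  have hfc : Continuous f := by
    rw [continuous_iff_continuousAt]; exact fun t => (hf t).continuousAt
  set v : ℝ → ℂ := fun t => u t / f t with hv
  have hvc : Continuous v := hu.div hfc hne
  set I : ℝ → ℂ := fun t => ∫ x in (0:ℝ)..t, v x with hI
  have hIder : ∀ t, HasDerivAt I (v t) t := fun t => (hvc.integral_hasStrictDerivAt 0 t).hasDerivAt
  set F : ℝ → ℂ := fun t => f t * Complex.exp (-(I t)) with hF
  have hFder : ∀ t, HasDerivAt F 0 t := by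
    intro t
    have h1 : HasDerivAt (fun t => Complex.exp (-(I t))) (Complex.exp (-(I t)) * (-(v t))) t :=
      ((hIder t).neg).cexp
    have h2 := (hf t).mul h1
    refine h2.congr_deriv ?_
    have h3 : f t * v t = u t := by
      show f t * (u t / f t) = u t
      rw [mul_div_cancel₀ _ (hne t)]
    rw [← h3]; ring
  have hconst : F T = F 0 :=
    is_const_of_deriv_eq_zero (fun t => (hFder t).differentiableAt)
      (fun t => (hFder t).deriv) T 0
  have hF0 : F 0 = f 0 := by simp [hF, hI, intervalIntegral.integral_same]
  have key : f T * Complex.exp (-(I T)) = f 0 := by rw [← hF0]; exact hconst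
  show Complex.exp (I T) * f 0 = f T
  rw [← key]
  rw [mul_comm (f T), ← mul_assoc, ← Complex.exp_add]
  simp

private lemma intValued_const {f : ℝ → ℝ} (hf : Continuous f)
    (hint : ∀ s, ∃ n : ℤ, f s = n) (a b : ℝ) : f a = f b := by
  by_contra hcne
  obtain ⟨na, hna⟩ := hint a
  obtain ⟨nb, hnb⟩ := hint b
  have h1 : na ≠ nb := by
    rintro rfl; exact hcne (hna.trans hnb.symm)
  have hmem : ((min na nb : ℤ) : ℝ) + 1/2 ∈ Set.uIcc (f a) (f b) := by
    have h2 : (min na nb : ℤ) + 1 ≤ max na nb := by omega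
    have h2' : ((min na nb : ℤ) : ℝ) + 1 ≤ ((max na nb : ℤ) : ℝ) := by exact_mod_cast h2
    rw [Set.mem_uIcc]
    rcases le_total na nb with hle | hle
    · left
      simp only [min_eq_left hle, max_eq_right hle] at h2' ⊢
      constructor
      · rw [hna]; linarith
      · rw [hnb]; linarith
    · right
      simp only [min_eq_right hle, max_eq_left hle] at h2' ⊢
      constructor
      · rw [hnb]; linarith
      · rw [hna]; linarith
  obtain ⟨x, -, hx⟩ := intermediate_value_uIcc hf.continuousOn hmem
  obtain ⟨m, hm⟩ := hint x
  have hmk : ((m - min na nb : ℤ) : ℝ) = 1/2 := by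
    push_cast
    rw [hm] at hx
    push_cast at hx
    linarith
  have h0 : (0:ℤ) < m - min na nb := by
    have : (0:ℝ) < ((m - min na nb : ℤ) : ℝ) := by rw [hmk]; norm_num
    exact_mod_cast this
  have h1' : m - min na nb < 1 := by
    have : ((m - min na nb : ℤ) : ℝ) < 1 := by rw [hmk]; norm_num
    exact_mod_cast this
  omega

/-- Let `N ≥ 2` and `d ≥ 3`. Every smooth anti-symmetric function
`ψ : (Fin N → (Fin d → ℝ)) → ℂ` has a node outside the diagonal: there is an injective
tuple `x` with `ψ x = 0`. -/
theorem stmt_5 (N d : ℕ) (hN : 2 ≤ N) (hd : 3 ≤ d)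
    (ψ : (Fin N → Fin d → ℝ) → ℂ) (hsmooth : ContDiff ℝ (⊤ : ℕ∞) ψ)
    (hanti : ∀ (σ : Equiv.Perm (Fin N)) (x : Fin N → Fin d → ℝ),
      ψ (x ∘ ⇑σ) = (Equiv.Perm.sign σ : ℤ) • ψ x) :
    ∃ x : Fin N → Fin d → ℝ, Function.Injective x ∧ ψ x = 0 := by
  by_contra hcontra
  push_neg at hcontra
  set i0 : Fin N := ⟨0, by omega⟩ with hi0
  set i1 : Fin N := ⟨1, by omega⟩ with hi1
  set j0 : Fin d := ⟨0, by omega⟩ with hj0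
  set j1 : Fin d := ⟨1, by omega⟩ with hj1
  set j2 : Fin d := ⟨2, by omega⟩ with hj2
  have hi01 : i0 ≠ i1 := by simp [hi0, hi1, Fin.ext_iff]
  have hi10 : i1 ≠ i0 := hi01.symm
  have hj10 : j1 ≠ j0 := by simp [hj0, hj1, Fin.ext_iff]
  have hj20 : j2 ≠ j0 := by simp [hj0, hj2, Fin.ext_iff]
  have hj21 : j2 ≠ j1 := by simp [hj1, hj2, Fin.ext_iff]
  set A : ℝ × ℝ → Fin d → ℝ := fun p j =>
    if j = j0 then Real.cos (2*Real.pi*p.2) * Real.cos p.1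
    else if j = j1 then Real.sin (2*Real.pi*p.2) * Real.cos p.1
    else if j = j2 then Real.sin p.1 else 0 with hA
  set Y : ℝ × ℝ → Fin N → Fin d → ℝ := fun p i =>
    if i = i0 then A p else if i = i1 then -A p
    else fun j => if j = j2 then ((i : ℕ) : ℝ) else 0 with hY
  -- coordinate values of A
  have hAj0 : ∀ p : ℝ × ℝ, A p j0 = Real.cos (2*Real.pi*p.2) * Real.cos p.1 := by
    intro p; simp [hA]
  have hAj1 : ∀ p : ℝ × ℝ, A p j1 = Real.sin (2*Real.pi*p.2) * Real.cos p.1 := by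
    intro p; simp [hA, hj10]
  have hAj2 : ∀ p : ℝ × ℝ, A p j2 = Real.sin p.1 := by
    intro p; simp [hA, hj20, hj21]
  -- values of Y
  have hYi0 : ∀ p, Y p i0 = A p := by intro p; simp [hY]
  have hYi1 : ∀ p, Y p i1 = -A p := by intro p; simp [hY, hi10]
  have hYq : ∀ p (i : Fin N), i ≠ i0 → i ≠ i1 →
      Y p i = fun j => if j = j2 then ((i : ℕ) : ℝ) else 0 := by
    intro p i h1 h2; simp [hY, h1, h2]
  -- injectivity
  have hinj : ∀ p, Function.Injective (Y p) := by
    intro p i i' h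
    have hs1 : A p j2 ≤ 1 := by rw [hAj2]; exact Real.sin_le_one _
    have hs2 : -1 ≤ A p j2 := by rw [hAj2]; exact Real.neg_one_le_sin _
    have hsq : (A p j0)^2 + (A p j1)^2 + (A p j2)^2 = 1 := by
      rw [hAj0, hAj1, hAj2]
      linear_combination (Real.cos p.1)^2 * (Real.sin_sq_add_cos_sq (2*Real.pi*p.2))
        + Real.sin_sq_add_cos_sq p.1
    have hA0 : A p ≠ -A p := by
      intro hc
      have c0 := congrFun hc j0
      have c1 := congrFun hc j1
      have c2 := congrFun hc j2
      simp only [Pi.neg_apply] at c0 c1 c2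
      have z0 : A p j0 = 0 := by linarith
      have z1 : A p j1 = 0 := by linarith
      have z2 : A p j2 = 0 := by linarith
      rw [z0, z1, z2] at hsq
      norm_num at hsq
    have hq : ∀ k : Fin N, k ≠ i0 → k ≠ i1 → (2:ℝ) ≤ ((k : ℕ) : ℝ) := by
      intro k h1 h2
      have v0 : (k : ℕ) ≠ 0 := by
        intro hc; apply h1; rw [Fin.ext_iff, hi0]; exact hc
      have v1 : (k : ℕ) ≠ 1 := by
        intro hc; apply h2; rw [Fin.ext_iff, hi1]; exact hc
      have : 2 ≤ (k : ℕ) := by omega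
      exact_mod_cast this
    by_cases c0 : i = i0
    · by_cases c0' : i' = i0
      · rw [c0, c0']
      · by_cases c1' : i' = i1
        · exfalso
          rw [c0, c1', hYi0, hYi1] at h
          exact hA0 h
        · exfalso
          rw [c0, hYi0, hYq p i' c0' c1'] at h
          have hc : A p j2 = ((i' : ℕ) : ℝ) := by simpa using congrFun h j2
          have := hq i' c0' c1'
          linarith
    · by_cases c1 : i = i1
      · by_cases c0' : i' = i0
        · exfalso
          rw [c1, c0', hYi1, hYi0] at h
          exact hA0 h.symm
        · by_cases c1' : i' = i1
          · rw [c1, c1']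
          · exfalso
            rw [c1, hYi1, hYq p i' c0' c1'] at h
            have hc : -(A p j2) = ((i' : ℕ) : ℝ) := by simpa using congrFun h j2
            have := hq i' c0' c1'
            linarith
      · by_cases c0' : i' = i0
        · exfalso
          rw [c0', hYi0, hYq p i c0 c1] at h
          have hc : A p j2 = ((i : ℕ) : ℝ) := by simpa using congrFun h.symm j2
          have := hq i c0 c1
          linarith
        · by_cases c1' : i' = i1
          · exfalso
            rw [c1', hYi1, hYq p i c0 c1] at h
            have hc : -(A p j2) = ((i : ℕ) : ℝ) := by simpa using congrFun h.symm j2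
            have := hq i c0 c1
            linarith
          · rw [hYq p i c0 c1, hYq p i' c0' c1'] at h
            have hc : ((i : ℕ) : ℝ) = ((i' : ℕ) : ℝ) := by simpa using congrFun h j2
            have : (i : ℕ) = (i' : ℕ) := by exact_mod_cast hc
            exact Fin.ext this
  -- smoothness
  have hAsm : ContDiff ℝ (⊤ : ℕ∞) A := by
    rw [contDiff_pi]
    intro j
    by_cases h0 : j = j0
    · simp only [hA, if_pos h0]
      exact (Real.contDiff_cos.comp (contDiff_const.mul contDiff_snd)).mul
        (Real.contDiff_cos.comp contDiff_fst)
    · by_cases h1 : j = j1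
      · simp only [hA, if_neg h0, if_pos h1]
        exact (Real.contDiff_sin.comp (contDiff_const.mul contDiff_snd)).mul
          (Real.contDiff_cos.comp contDiff_fst)
      · by_cases h2 : j = j2
        · simp only [hA, if_neg h0, if_neg h1, if_pos h2]
          exact Real.contDiff_sin.comp contDiff_fst
        · simp only [hA, if_neg h0, if_neg h1, if_neg h2]
          exact contDiff_const
  have hYsm : ContDiff ℝ (⊤ : ℕ∞) Y := by
    rw [contDiff_pi]
    intro i
    by_cases h0 : i = i0
    · simp only [hY, if_pos h0]
      exact hAsm
    · by_cases h1 : i = i1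
      · simp only [hY, if_neg h0, if_pos h1]
        exact hAsm.neg
      · simp only [hY, if_neg h0, if_neg h1]
        exact contDiff_const
  set G : ℝ × ℝ → ℂ := fun p => ψ (Y p) with hGdef
  have hGsm : ContDiff ℝ (⊤ : ℕ∞) G := hsmooth.comp hYsm
  have hGc : Continuous G := hGsm.continuous
  have hGne : ∀ p, G p ≠ 0 := fun p => hcontra (Y p) (hinj p)
  set u : ℝ × ℝ → ℂ := fun p => fderiv ℝ G p (0, 1) with hu
  have huc : Continuous u := (hGsm.continuous_fderiv (by simp)).clm_apply continuous_const
  have hder : ∀ s t : ℝ, HasDerivAt (fun t => G (s, t)) (u (s, t)) t := by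
    intro s t
    have h1 : HasFDerivAt G (fderiv ℝ G (s, t)) (s, t) :=
      (hGsm.differentiable (by simp) (s, t)).hasFDerivAt
    have h2 : HasDerivAt (fun t : ℝ => ((s, t) : ℝ × ℝ)) (0, 1) t :=
      (hasDerivAt_const t s).prodMk (hasDerivAt_id t)
    exact h1.comp_hasDerivAt t h2
  -- identities of A
  have hA1 : ∀ s t : ℝ, A (s, t+1) = A (s, t) := by
    intro s t
    funext j
    have e : 2*Real.pi*((s, t+1) : ℝ × ℝ).2 = 2*Real.pi*t + 2*Real.pi := by
      show 2*Real.pi*(t+1) = _; ring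
    simp only [hA, e, Real.cos_add_two_pi, Real.sin_add_two_pi]
  have hA2 : ∀ t : ℝ, A (0, t+1/2) = -A (0, t) := by
    intro t
    funext j
    have e : 2*Real.pi*((0, t+1/2) : ℝ × ℝ).2 = 2*Real.pi*t + Real.pi := by
      show 2*Real.pi*(t+1/2) = _; ring
    simp only [hA, Pi.neg_apply, e, Real.cos_add_pi, Real.sin_add_pi]
    split_ifs <;> simp [Real.sin_zero]
  have hA3 : ∀ t : ℝ, A (Real.pi/2, t) = A (Real.pi/2, 0) := by
    intro t
    funext j
    simp only [hA, Real.cos_pi_div_two, mul_zero]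
  have hYcongr : ∀ p q : ℝ × ℝ, A p = A q → Y p = Y q := by
    intro p q hAe
    funext i
    by_cases h0 : i = i0
    · rw [h0, hYi0, hYi0, hAe]
    · by_cases h1 : i = i1
      · rw [h1, hYi1, hYi1, hAe]
      · rw [hYq _ _ h0 h1, hYq _ _ h0 h1]
  have hYper : ∀ s : ℝ, Y (s, 1) = Y (s, 0) := by
    intro s
    apply hYcongr
    have := hA1 s 0
    norm_num at this
    exact this
  have hYconst : ∀ t : ℝ, Y (Real.pi/2, t) = Y (Real.pi/2, 0) := fun t => hYcongr _ _ (hA3 t)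
  -- swap identity
  have hswap : ∀ t : ℝ, Y (0, t+1/2) = Y (0, t) ∘ Equiv.swap i0 i1 := by
    intro t
    funext i
    simp only [Function.comp_apply]
    by_cases h0 : i = i0
    · rw [h0, Equiv.swap_apply_left, hYi0, hYi1, hA2]
    · by_cases h1 : i = i1
      · rw [h1, Equiv.swap_apply_right, hYi1, hYi0, hA2, neg_neg]
      · rw [Equiv.swap_apply_of_ne_of_ne h0 h1, hYq _ _ h0 h1, hYq _ _ h0 h1]
  have hGswap : ∀ t : ℝ, G (0, t+1/2) = -G (0, t) := by
    intro t
    show ψ (Y (0, t+1/2)) = -ψ (Y (0, t))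
    rw [hswap t, hanti (Equiv.swap i0 i1) (Y (0, t)), Equiv.Perm.sign_swap hi01]
    simp
  have hGper : ∀ s : ℝ, G (s, 1) = G (s, 0) := by
    intro s
    show ψ (Y (s, 1)) = ψ (Y (s, 0))
    rw [hYper s]
  -- derivative identities
  have hu2 : ∀ t : ℝ, u (0, t+1/2) = -u (0, t) := by
    intro t
    have d1 : HasDerivAt (fun t : ℝ => G (0, t+1/2)) (u (0, t+1/2)) t := by
      have hg : HasDerivAt (fun x : ℝ => x + 1/2) 1 t := by
        simpa using (hasDerivAt_id t).add_const (1/2:ℝ)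
      have hcv : HasDerivAt (fun x : ℝ => (((0:ℝ), x + 1/2) : ℝ × ℝ)) ((0:ℝ), (1:ℝ)) t :=
        (hasDerivAt_const t (0:ℝ)).prodMk hg
      have h1 : HasFDerivAt G (fderiv ℝ G ((0:ℝ), t+1/2)) ((0:ℝ), t+1/2) :=
        (hGsm.differentiable (by simp) _).hasFDerivAt
      exact h1.comp_hasDerivAt t hcv
    have d2 : HasDerivAt (fun t : ℝ => G (0, t+1/2)) (-u (0, t)) t := by
      have heq : (fun t : ℝ => G (0, t+1/2)) = fun t => -G (0, t) :=
        funext fun t => hGswap t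
      rw [heq]
      exact (hder 0 t).neg
    exact d1.unique d2
  have hu3 : ∀ t : ℝ, u (Real.pi/2, t) = 0 := by
    intro t
    have d2 : HasDerivAt (fun t : ℝ => G (Real.pi/2, t)) 0 t := by
      have heq : (fun t : ℝ => G (Real.pi/2, t)) = fun _ => G (Real.pi/2, 0) :=
        funext fun t => by show ψ (Y (Real.pi/2, t)) = ψ (Y (Real.pi/2, 0)); rw [hYconst t]
      rw [heq]
      exact hasDerivAt_const t _
    exact (hder (Real.pi/2) t).unique d2
  -- the winding integral
  set v : ℝ × ℝ → ℂ := fun p => u p / G p with hvdef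
  have hvc : Continuous v := huc.div hGc hGne
  set h : ℝ → ℂ := fun s => ∫ t in (0:ℝ)..1, v (s, t) with hhdef
  have hhc : Continuous h := by
    apply intervalIntegral.continuous_parametric_intervalIntegral_of_continuous'
      (f := fun s t => v (s, t)) (μ := volume)
    exact hvc.comp (continuous_fst.prodMk continuous_snd)
  have hexp : ∀ s T : ℝ, Complex.exp (∫ t in (0:ℝ)..T, v (s, t)) * G (s, 0) = G (s, T) := by
    intro s T
    exact exp_integral_logDeriv (hder s) (huc.comp (Continuous.prodMk_right s))
      (fun t => hGne (s, t)) T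
  have hint : ∀ s : ℝ, ∃ n : ℤ, h s = n * (2 * Real.pi * Complex.I) := by
    intro s
    have h1 := hexp s 1
    rw [hGper s] at h1
    have h2 : Complex.exp (h s) = 1 := by
      have h3 : Complex.exp (h s) * G (s, 0) = 1 * G (s, 0) := by
        rw [one_mul]; exact h1
      exact mul_right_cancel₀ (hGne (s, 0)) h3
    exact Complex.exp_eq_one_iff.mp h2
  have hzero : h (Real.pi/2) = 0 := by
    show (∫ t in (0:ℝ)..1, v (Real.pi/2, t)) = 0
    have hz : ∀ t : ℝ, v (Real.pi/2, t) = 0 := by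
      intro t
      show u (Real.pi/2, t) / G (Real.pi/2, t) = 0
      rw [hu3 t, zero_div]
    simp [hz]
  have h2πI : (2 * (Real.pi:ℂ) * Complex.I) ≠ 0 := by
    apply mul_ne_zero (mul_ne_zero two_ne_zero _) Complex.I_ne_zero
    exact Complex.ofReal_ne_zero.mpr Real.pi_ne_zero
  set r : ℝ → ℝ := fun s => (h s / (2 * (Real.pi:ℂ) * Complex.I)).re with hrdef
  have hrc : Continuous r := Complex.continuous_re.comp (hhc.div_const _)
  have hrval : ∀ s (n : ℤ), h s = n * (2 * Real.pi * Complex.I) → r s = n := by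
    intro s n hn
    show (h s / (2 * (Real.pi:ℂ) * Complex.I)).re = n
    rw [hn, mul_div_cancel_right₀ _ h2πI]
    simp
  have hrint : ∀ s, ∃ n : ℤ, r s = n := by
    intro s
    obtain ⟨n, hn⟩ := hint s
    exact ⟨n, hrval s n hn⟩
  have hr0 : r 0 = r (Real.pi/2) := intValued_const hrc hrint 0 (Real.pi/2)
  have hrpi : r (Real.pi/2) = 0 := by
    show (h (Real.pi/2) / (2 * (Real.pi:ℂ) * Complex.I)).re = 0
    rw [hzero]
    simp
  have hh0 : h 0 = 0 := by
    obtain ⟨n, hn⟩ := hint 0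
    have h4 : ((n:ℝ)) = 0 := by
      have := hrval 0 n hn
      rw [hr0, hrpi] at this
      exact this.symm
    have h5 : (n : ℂ) = 0 := by exact_mod_cast h4
    rw [hn, h5, zero_mul]
  -- split the integral
  have hvc0 : Continuous (fun t : ℝ => v (0, t)) := hvc.comp (Continuous.prodMk_right 0)
  have hsplit : h 0 = (∫ t in (0:ℝ)..(1/2:ℝ), v (0, t)) + ∫ t in (1/2:ℝ)..1, v (0, t) := by
    show (∫ t in (0:ℝ)..1, v (0, t)) = _
    exact (intervalIntegral.integral_add_adjacent_intervals
      (hvc0.intervalIntegrable _ _) (hvc0.intervalIntegrable _ _)).symm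
  have hv2 : ∀ t : ℝ, v (0, t+1/2) = v (0, t) := by
    intro t
    show u (0, t+1/2) / G (0, t+1/2) = u (0, t) / G (0, t)
    rw [hu2 t, hGswap t, neg_div_neg_eq]
  have hshift : (∫ t in (1/2:ℝ)..1, v (0, t)) = ∫ t in (0:ℝ)..(1/2:ℝ), v (0, t) := by
    have hcomp := intervalIntegral.integral_comp_add_right (a := (0:ℝ)) (b := (1/2:ℝ))
      (fun t => v (0, t)) (1/2)
    norm_num at hcomp
    rw [← hcomp]
    simp only [hv2]
  have hJ : (∫ t in (0:ℝ)..(1/2:ℝ), v (0, t)) = 0 := by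
    have h7 : h 0 = (∫ t in (0:ℝ)..(1/2:ℝ), v (0, t)) + (∫ t in (0:ℝ)..(1/2:ℝ), v (0, t)) := by
      rw [hsplit, hshift]
    have h8 := hh0
    rw [h7] at h8
    exact add_self_eq_zero.mp h8
  have hexpJ := hexp 0 (1/2)
  rw [hJ, Complex.exp_zero, one_mul] at hexpJ
  have hGhalf : G (0, 1/2) = -G (0, 0) := by
    have := hGswap 0
    norm_num at this
    exact this
  rw [hGhalf] at hexpJ
  have : G (0, 0) = 0 := by
    have h6 : G (0, 0) + G (0, 0) = 0 := by
      nth_rewrite 1 [hexpJ]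
      ring
    exact add_self_eq_zero.mp h6
  exact hGne (0, 0) this
end

section
/- Let 𝓗 and 𝓗' be complex Hilbert spaces, let T : 𝓗 →ₗ.[ℂ] 𝓗 be a densely defined self-adjoint operator (T.adjoint = T), and let e : 𝓗 ≃ₗᵢ[ℂ] 𝓗' be a unitary isomorphism (linear isometric equivalence). Then the conjugated operator T' on 𝓗' — with domain e '' (dom T) and defined by T'(e x) = e(T x) for x ∈ dom T — is densely defined and self-adjoint: T'.adjoint = T'. -/
/-!
Conjugation by unitaries commutes with taking adjoints: since unitaries preserve inner products,
`⟪eF.symm y, T x⟫ = ⟪y, eF (T x)⟫`, so `y` satisfies the defining relation of the adjoint of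
`eF ∘ T ∘ eE.symm` exactly when `eF.symm y` satisfies that of the adjoint of `T`. Hence
`(eF ∘ T ∘ eE.symm)† = eE ∘ T† ∘ eF.symm`, and with `eE = eF = e` and `T† = T` the conjugate is
self-adjoint (density of the domain is part of self-adjointness, and `e` is a homeomorphism).
-/

open scoped InnerProductSpace

namespace LinearPMap

section Conj

variable {R E E' F F' : Type*} [Ring R] [AddCommGroup E] [Module R E] [AddCommGroup E']
  [Module R E'] [AddCommGroup F] [Module R F] [AddCommGroup F'] [Module R F']

def conj (T : E →ₗ.[R] F) (eE : E ≃ₗ[R] E') (eF : F ≃ₗ[R] F') : E' →ₗ.[R] F' where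
  domain := T.domain.map (eE : E →ₗ[R] E')
  toFun := (eF : F →ₗ[R] F') ∘ₗ T.toFun ∘ₗ ((eE.submoduleMap T.domain).symm : _ →ₗ[R] T.domain)

variable (T : E →ₗ.[R] F) (eE : E ≃ₗ[R] E') (eF : F ≃ₗ[R] F')

theorem coe_conj_domain : ((T.conj eE eF).domain : Set E') = eE '' T.domain :=
  Submodule.map_coe _ _

theorem mem_conj_domain_iff {y : E'} : y ∈ (T.conj eE eF).domain ↔ eE.symm y ∈ T.domain :=
  Submodule.mem_map_equiv _

theorem conj_apply (y : (T.conj eE eF).domain) :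
    T.conj eE eF y = eF (T ⟨eE.symm y, (T.mem_conj_domain_iff eE eF).1 y.2⟩) := by
  obtain ⟨y, x, hx, rfl⟩ := y
  congr 2

theorem conj_apply_map (x : T.domain) (h : eE x ∈ (T.conj eE eF).domain) :
    T.conj eE eF ⟨eE x, h⟩ = eF (T x) := by
  simp [conj_apply]

end Conj

variable {𝕜 E E' F F' : Type*} [RCLike 𝕜]
  [NormedAddCommGroup E] [InnerProductSpace 𝕜 E] [NormedAddCommGroup E'] [InnerProductSpace 𝕜 E']
  [NormedAddCommGroup F] [InnerProductSpace 𝕜 F] [NormedAddCommGroup F'] [InnerProductSpace 𝕜 F']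
  {T : E →ₗ.[𝕜] F} {S : F →ₗ.[𝕜] E} (eE : E ≃ₗᵢ[𝕜] E') (eF : F ≃ₗᵢ[𝕜] F')

theorem dense_conj_domain (hT : Dense (T.domain : Set E)) (f : F ≃ₗ[𝕜] F') :
    Dense ((T.conj eE.toLinearEquiv f).domain : Set E') := by
  rw [coe_conj_domain]
  exact eE.toHomeomorph.isDenseEmbedding.dense_image.2 hT

theorem IsFormalAdjoint.conj (h : T.IsFormalAdjoint S) :
    (T.conj eE.toLinearEquiv eF.toLinearEquiv).IsFormalAdjoint
      (S.conj eF.toLinearEquiv eE.toLinearEquiv) := by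
  intro x y
  have h_pulled := h ⟨eE.symm x, (T.mem_conj_domain_iff _ _).1 x.2⟩
    ⟨eF.symm y, (S.mem_conj_domain_iff _ _).1 y.2⟩
  rw [eE.symm.inner_map_eq_flip, LinearIsometryEquiv.symm_symm] at h_pulled
  rw [conj_apply, conj_apply, LinearIsometryEquiv.coe_toLinearEquiv,
    LinearIsometryEquiv.coe_toLinearEquiv, eF.inner_map_eq_flip]
  exact h_pulled

theorem adjoint_conj [CompleteSpace E] [CompleteSpace E'] (hT : Dense (T.domain : Set E)) :
    (T.conj eE.toLinearEquiv eF.toLinearEquiv)† = T†.conj eF.toLinearEquiv eE.toLinearEquiv := by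
  set A := T.conj eE.toLinearEquiv eF.toLinearEquiv
  have hA : Dense (A.domain : Set E') := dense_conj_domain eE hT _
  have hle : T†.conj eF.toLinearEquiv eE.toLinearEquiv ≤ A† :=
    ((adjoint_isFormalAdjoint hT).conj eF eE).symm.le_adjoint hA
  have hdomain : A†.domain ≤ (T†.conj eF.toLinearEquiv eE.toLinearEquiv).domain := by
    intro y hy
    rw [mem_conj_domain_iff]
    refine mem_adjoint_domain_of_exists _ ⟨eE.symm (A† ⟨y, hy⟩), fun x => ?_⟩
    have hx : eE x ∈ A.domain := Submodule.mem_map_of_mem x.2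
    calc ⟪eE.symm (A† ⟨y, hy⟩), (x : E)⟫_𝕜
        = ⟪A† ⟨y, hy⟩, eE x⟫_𝕜 := by
          rw [eE.symm.inner_map_eq_flip, LinearIsometryEquiv.symm_symm]
      _ = ⟪y, A ⟨eE x, hx⟩⟫_𝕜 := adjoint_isFormalAdjoint hA ⟨y, hy⟩ ⟨eE x, hx⟩
      _ = ⟪y, eF (T x)⟫_𝕜 := congrArg _ (T.conj_apply_map _ _ x hx)
      _ = ⟪eF.symm y, T x⟫_𝕜 := by
          rw [eF.symm.inner_map_eq_flip, LinearIsometryEquiv.symm_symm]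
  exact (eq_of_le_of_domain_eq hle (le_antisymm hle.1 hdomain)).symm

end LinearPMap

theorem stmt_9_general {𝓗 𝓗' : Type*}
    [NormedAddCommGroup 𝓗] [InnerProductSpace ℂ 𝓗] [CompleteSpace 𝓗]
    [NormedAddCommGroup 𝓗'] [InnerProductSpace ℂ 𝓗'] [CompleteSpace 𝓗']
    (T : 𝓗 →ₗ.[ℂ] 𝓗)
    (hsa : T.adjoint = T) (e : 𝓗 ≃ₗᵢ[ℂ] 𝓗') :
    ∃ T' : 𝓗' →ₗ.[ℂ] 𝓗',
      (T'.domain : Set 𝓗') = ⇑e '' (T.domain : Set 𝓗) ∧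
      (∀ (x : T.domain) (h : e (x : 𝓗) ∈ T'.domain), T' ⟨e (x : 𝓗), h⟩ = e (T x)) ∧
      Dense (T'.domain : Set 𝓗') ∧
      T'.adjoint = T' := by
  have hdense : Dense (T.domain : Set 𝓗) := (LinearPMap.isSelfAdjoint_def.2 hsa).dense_domain
  refine ⟨T.conj e.toLinearEquiv e.toLinearEquiv, T.coe_conj_domain _ _,
    T.conj_apply_map _ _, LinearPMap.dense_conj_domain e hdense _, ?_⟩
  rw [LinearPMap.adjoint_conj e e hdense, hsa]

/-- Transport of a densely defined self-adjoint operator by a unitary isomorphism: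
if `T` is a densely defined self-adjoint operator on the complex Hilbert space `𝓗` and
`e : 𝓗 ≃ₗᵢ[ℂ] 𝓗'` is a unitary isomorphism, then the conjugated operator `T'` on `𝓗'`,
with domain `e '' (dom T)` and `T' (e x) = e (T x)`, is densely defined and self-adjoint. -/
theorem stmt_9 {𝓗 𝓗' : Type*}
    [NormedAddCommGroup 𝓗] [InnerProductSpace ℂ 𝓗] [CompleteSpace 𝓗]
    [NormedAddCommGroup 𝓗'] [InnerProductSpace ℂ 𝓗'] [CompleteSpace 𝓗']
    (T : 𝓗 →ₗ.[ℂ] 𝓗) (hdense : Dense (T.domain : Set 𝓗))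
    (hsa : T.adjoint = T) (e : 𝓗 ≃ₗᵢ[ℂ] 𝓗') :
    ∃ T' : 𝓗' →ₗ.[ℂ] 𝓗',
      (T'.domain : Set 𝓗') = ⇑e '' (T.domain : Set 𝓗) ∧
      (∀ (x : T.domain) (h : e (x : 𝓗) ∈ T'.domain), T' ⟨e (x : 𝓗), h⟩ = e (T x)) ∧
      Dense (T'.domain : Set 𝓗') ∧
      T'.adjoint = T' :=
  stmt_9_general T hsa e
end

section
/- Fix N ≥ 1 and d ≥ 1, and let μ be Lebesgue measure (volume) on the space Fin N → (Fin d → ℝ). Let D be a measurable fundamental domain (MeasureTheory.IsFundamentalDomain) for the action of S_N given by σ • x = x ∘ σ⁻¹. Let 𝒜 be the set of ψ ∈ L²(μ, ℂ) such that for every σ ∈ S_N, ψ(x ∘ σ) = (sign σ) • ψ(x) for μ-almost every x (the anti-symmetric subspace). Then 𝒜 is a closed linear subspace of L²(μ, ℂ), and the map sending ψ ∈ 𝒜 to √(N!) times the restriction of ψ to D (viewed as an element of L²(μ restricted to D, ℂ)) is a linear isometric bijection from 𝒜 onto L²(μ.restrict D, ℂ). -/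
/-! For a finite group `G` acting on `α` by measure-preserving maps with fundamental domain `D`, and
a character `χ : G →* ℂ`, the functions `ψ` with `ψ (g⁻¹ • x) = χ g * ψ x` have `‖ψ‖²` a.e.
`G`-invariant, since `‖χ g‖ = 1`. Splitting `∫ ‖ψ‖²` over the `|G|` translates of `D` gives
`‖ψ‖ = √|G| * ‖ψ|_D‖`. Conversely, any `φ ∈ L²(D)` is the restriction of the isotypic function
`x ↦ ∑ g, χ g * φ̃ (g • x)`, with `φ̃` the extension of `φ` by zero: for a.e. `x ∈ D` the point
`g • x` lies outside `D` when `g ≠ 1`, so only the term `g = 1` survives. The theorem is the case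
`G = S_N`, `χ = sign`. -/

open MeasureTheory

instance permFunMulAction (N : ℕ) (X : Type*) : MulAction (Equiv.Perm (Fin N)) (Fin N → X) where
  smul σ x := x ∘ ⇑σ⁻¹
  one_smul x := by
    funext i
    simp [HSMul.hSMul]
  mul_smul σ τ x := by
    funext i
    simp [HSMul.hSMul, mul_inv_rev, Equiv.Perm.mul_apply]

open scoped ENNReal

section Periodize

variable {G α : Type*} [Group G] [Fintype G] [MulAction G α]

def periodize (χ : G →* ℂ) (f : α → ℂ) (x : α) : ℂ :=
  ∑ g : G, χ g * f (g • x)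

theorem periodize_inv_smul (χ : G →* ℂ) (f : α → ℂ) (h : G) (x : α) :
    periodize χ f (h⁻¹ • x) = χ h * periodize χ f x := by
  simp only [periodize, smul_smul, Finset.mul_sum]
  refine Fintype.sum_equiv (Equiv.mulRight h⁻¹) _ _ fun g => ?_
  rw [Equiv.coe_mulRight, ← mul_assoc, mul_comm (χ h), ← map_mul, inv_mul_cancel_right]

theorem MeasureTheory.IsFundamentalDomain.periodize_indicator_ae_eq [MeasurableSpace α]
    {μ : Measure α} {D : Set α} (hD : IsFundamentalDomain G D μ) (χ : G →* ℂ) (f : α → ℂ) :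
    periodize χ (D.indicator f) =ᵐ[μ.restrict D] f := by
  have hfrontier : ∀ᵐ x ∂μ.restrict D, x ∉ fundamentalFrontier G D :=
    ae_restrict_of_ae (measure_eq_zero_iff_ae_notMem.1 hD.measure_fundamentalFrontier)
  filter_upwards [hfrontier, ae_restrict_mem₀ hD.nullMeasurableSet] with x hx hxD
  have hout : ∀ g : G, g ≠ 1 → g • x ∉ D := fun g hg hgx =>
    hx (mem_fundamentalFrontier.2 ⟨hxD, g⁻¹, inv_ne_one.2 hg, Set.mem_inv_smul_set_iff.2 hgx⟩)
  rw [periodize, Finset.sum_eq_single_of_mem 1 (Finset.mem_univ _)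
    fun g _ hg => by rw [Set.indicator_of_notMem (hout g hg), mul_zero], map_one, one_mul,
    one_smul, Set.indicator_of_mem hxD]

end Periodize

section Isotypic

variable {G α : Type*} [Group G] [MulAction G α] [MeasurableSpace α] [MeasurableConstSMul G α]
  {μ : Measure α} [SMulInvariantMeasure G α μ]

theorem MeasureTheory.MemLp.periodize [Fintype G] {f : α → ℂ} {p : ℝ≥0∞} (hf : MemLp f p μ)
    (χ : G →* ℂ) : MemLp (periodize χ f) p μ :=
  memLp_finsetSum _ fun g _ => (hf.comp_measurePreserving (measurePreserving_smul g μ)).const_mul _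

variable (μ) in
noncomputable def isotypicSubspace (χ : G →* ℂ) : Submodule ℂ (Lp ℂ 2 μ) :=
  ⨅ g : G, LinearMap.ker
    ((Lp.compMeasurePreservingₗᵢ ℂ (g⁻¹ • ·) (measurePreserving_smul g⁻¹ μ)).toContinuousLinearMap
      - χ g • ContinuousLinearMap.id ℂ (Lp ℂ 2 μ)).toLinearMap

theorem mem_isotypicSubspace {χ : G →* ℂ} {ψ : Lp ℂ 2 μ} :
    ψ ∈ isotypicSubspace μ χ ↔ ∀ g : G, ∀ᵐ x ∂μ, ψ (g⁻¹ • x) = χ g * ψ x := by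
  simp only [isotypicSubspace, Submodule.mem_iInf, LinearMap.mem_ker,
    ContinuousLinearMap.toLinearMap_sub, ContinuousLinearMap.toLinearMap_smul, LinearMap.sub_apply,
    LinearMap.smul_apply, LinearIsometry.toLinearMap_toContinuousLinearMap,
    LinearIsometry.coe_toLinearMap, ContinuousLinearMap.coe_id, LinearMap.id_coe, id_eq, sub_eq_zero]
  refine forall_congr' fun g => ?_
  have hT : ⇑(Lp.compMeasurePreservingₗᵢ ℂ (g⁻¹ • ·) (measurePreserving_smul g⁻¹ μ) ψ)
      =ᵐ[μ] fun x => ψ (g⁻¹ • x) :=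
    Lp.coeFn_compMeasurePreserving ψ _
  rw [Lp.ext_iff, hT.congr_left, (Lp.coeFn_smul (χ g) ψ).congr_right]
  rfl

theorem isClosed_isotypicSubspace (χ : G →* ℂ) :
    IsClosed (isotypicSubspace μ χ : Set (Lp ℂ 2 μ)) := by
  rw [isotypicSubspace, Submodule.coe_iInf]
  exact isClosed_iInter fun g => ContinuousLinearMap.isClosed_ker _

theorem enorm_smul_ae_eq_of_mem_isotypicSubspace [Finite G] {χ : G →* ℂ} {ψ : Lp ℂ 2 μ}
    (hψ : ψ ∈ isotypicSubspace μ χ) (g : G) : ∀ᵐ x ∂μ, ‖ψ (g • x)‖ₑ = ‖ψ x‖ₑ := by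
  filter_upwards [mem_isotypicSubspace.1 hψ g⁻¹] with x hx
  rw [inv_inv] at hx
  rw [hx, enorm_mul, ← ofReal_norm, (χ.isOfFinOrder (isOfFinOrder_of_finite g⁻¹)).norm_eq_one,
    ENNReal.ofReal_one, one_mul]

namespace MeasureTheory.IsFundamentalDomain

variable [Fintype G] {D : Set α}

theorem lintegral_eq_card_mul_setLIntegral (hD : IsFundamentalDomain G D μ) {f : α → ℝ≥0∞}
    (hf : ∀ g : G, ∀ᵐ x ∂μ, f (g • x) = f x) :
    ∫⁻ x, f x ∂μ = Fintype.card G * ∫⁻ x in D, f x ∂μ := by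
  rw [hD.lintegral_eq_tsum'', tsum_fintype,
    Finset.sum_congr rfl fun g _ => lintegral_congr_ae (ae_restrict_of_ae (hf g)), Finset.sum_const,
    Finset.card_univ, nsmul_eq_mul]

theorem eLpNorm_eq_card_rpow_mul_eLpNorm_restrict (hD : IsFundamentalDomain G D μ)
    {E : Type*} [NormedAddCommGroup E] {f : α → E} {p : ℝ≥0∞} (hp0 : p ≠ 0) (hp : p ≠ ∞)
    (hf : ∀ g : G, ∀ᵐ x ∂μ, ‖f (g • x)‖ₑ = ‖f x‖ₑ) :
    eLpNorm f p μ = (Fintype.card G : ℝ≥0∞) ^ (1 / p.toReal) * eLpNorm f p (μ.restrict D) := by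
  have hf' : ∀ g : G, ∀ᵐ x ∂μ, ‖f (g • x)‖ₑ ^ p.toReal = ‖f x‖ₑ ^ p.toReal := fun g => by
    filter_upwards [hf g] with x hx
    rw [hx]
  rw [eLpNorm_eq_lintegral_rpow_enorm_toReal hp0 hp, eLpNorm_eq_lintegral_rpow_enorm_toReal hp0 hp,
    hD.lintegral_eq_card_mul_setLIntegral hf', ENNReal.mul_rpow_of_nonneg _ _ (by positivity)]

theorem norm_eq_sqrt_card_mul_norm_restrict (hD : IsFundamentalDomain G D μ) {χ : G →* ℂ}
    {ψ : Lp ℂ 2 μ} (hψ : ψ ∈ isotypicSubspace μ χ) :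
    ‖ψ‖ = √(Fintype.card G) * ‖LpToLpRestrictCLM α ℂ ℂ μ 2 D ψ‖ := by
  have hnorm := hD.eLpNorm_eq_card_rpow_mul_eLpNorm_restrict two_ne_zero ENNReal.ofNat_ne_top
    (enorm_smul_ae_eq_of_mem_isotypicSubspace hψ)
  rw [Lp.norm_def, Lp.norm_def, eLpNorm_congr_ae (LpToLpRestrictCLM_coeFn ℂ D ψ), hnorm,
    ENNReal.toReal_mul, ← ENNReal.toReal_rpow, ENNReal.toReal_natCast, ENNReal.toReal_ofNat,
    Real.sqrt_eq_rpow]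

theorem exists_mem_isotypicSubspace_restrict_eq (hD : IsFundamentalDomain G D μ)
    (hDm : MeasurableSet D) (χ : G →* ℂ) (φ : Lp ℂ 2 (μ.restrict D)) :
    ∃ ψ ∈ isotypicSubspace μ χ, LpToLpRestrictCLM α ℂ ℂ μ 2 D ψ = φ := by
  have hf : MemLp (periodize χ (D.indicator φ)) 2 μ :=
    ((memLp_indicator_iff_restrict hDm).2 (Lp.memLp φ)).periodize χ
  refine ⟨hf.toLp _, mem_isotypicSubspace.2 fun g => ?_, Lp.ext ?_⟩
  · have hcomp := (measurePreserving_smul g⁻¹ μ).quasiMeasurePreserving.ae_eq_comp hf.coeFn_toLp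
    filter_upwards [hf.coeFn_toLp, hcomp] with x hx hgx
    simp only [Function.comp_apply] at hgx
    rw [hgx, hx, periodize_inv_smul]
  · filter_upwards [LpToLpRestrictCLM_coeFn ℂ D (hf.toLp _), ae_restrict_of_ae hf.coeFn_toLp,
      hD.periodize_indicator_ae_eq χ φ] with x h1 h2 h3
    rw [h1, h2, h3]

variable (μ) in
noncomputable def isotypicRestrictₗᵢ (hD : IsFundamentalDomain G D μ) (χ : G →* ℂ) :
    isotypicSubspace μ χ →ₗᵢ[ℂ] Lp ℂ 2 (μ.restrict D) where
  toLinearMap := ((√(Fintype.card G) : ℝ) : ℂ) •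
    (LpToLpRestrictCLM α ℂ ℂ μ 2 D).toLinearMap ∘ₗ (isotypicSubspace μ χ).subtype
  norm_map' ψ := by
    change ‖((√(Fintype.card G) : ℝ) : ℂ) • LpToLpRestrictCLM α ℂ ℂ μ 2 D ψ‖ = ‖(ψ : Lp ℂ 2 μ)‖
    rw [norm_smul, Complex.norm_real, Real.norm_of_nonneg (Real.sqrt_nonneg _),
      hD.norm_eq_sqrt_card_mul_norm_restrict ψ.2]

theorem isotypicRestrictₗᵢ_apply (hD : IsFundamentalDomain G D μ) (χ : G →* ℂ)
    (ψ : isotypicSubspace μ χ) :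
    hD.isotypicRestrictₗᵢ μ χ ψ =
      ((√(Fintype.card G) : ℝ) : ℂ) • LpToLpRestrictCLM α ℂ ℂ μ 2 D ψ :=
  rfl

theorem isotypicRestrictₗᵢ_surjective (hD : IsFundamentalDomain G D μ) (hDm : MeasurableSet D)
    (χ : G →* ℂ) : Function.Surjective (hD.isotypicRestrictₗᵢ μ χ) := fun φ => by
  have hc : ((√(Fintype.card G) : ℝ) : ℂ) ≠ 0 := by
    exact_mod_cast (Real.sqrt_pos.2 (Nat.cast_pos.2 Fintype.card_pos)).ne'
  obtain ⟨ψ, hψ, hrestrict⟩ :=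
    hD.exists_mem_isotypicSubspace_restrict_eq hDm χ (((√(Fintype.card G) : ℝ) : ℂ)⁻¹ • φ)
  refine ⟨⟨ψ, hψ⟩, ?_⟩
  rw [isotypicRestrictₗᵢ_apply, hrestrict, smul_inv_smul₀ hc]

end MeasureTheory.IsFundamentalDomain

end Isotypic

section Permutations

variable {N : ℕ} {X : Type*}

instance [MeasurableSpace X] : MeasurableConstSMul (Equiv.Perm (Fin N)) (Fin N → X) :=
  ⟨fun σ => measurable_pi_lambda _ fun i => measurable_pi_apply (σ⁻¹ i)⟩

instance [MeasurableSpace X] (μ : Measure X) [SigmaFinite μ] :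
    SMulInvariantMeasure (Equiv.Perm (Fin N)) (Fin N → X) (Measure.pi fun _ => μ) :=
  ⟨fun σ _ hs => (measurePreserving_arrowCongr' (fun _ => μ) (fun _ => μ) σ
    (MeasurableEquiv.refl X) fun _ => .id μ).measure_preimage hs.nullMeasurableSet⟩

instance [MeasureSpace X] [SigmaFinite (volume : Measure X)] :
    SMulInvariantMeasure (Equiv.Perm (Fin N)) (Fin N → X) volume :=
  inferInstanceAs (SMulInvariantMeasure _ _ (Measure.pi fun _ => volume))

end Permutations

theorem stmt_11_general (N d : ℕ)
    (D : Set (Fin N → Fin d → ℝ)) (hDmeas : MeasurableSet D)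
    (hDfd : IsFundamentalDomain (Equiv.Perm (Fin N)) D
      (volume : Measure (Fin N → Fin d → ℝ))) :
    ∃ A : Submodule ℂ (Lp ℂ 2 (volume : Measure (Fin N → Fin d → ℝ))),
      (A : Set (Lp ℂ 2 (volume : Measure (Fin N → Fin d → ℝ))))
        = {ψ : Lp ℂ 2 (volume : Measure (Fin N → Fin d → ℝ)) |
            ∀ σ : Equiv.Perm (Fin N), ∀ᵐ x ∂(volume : Measure (Fin N → Fin d → ℝ)),
              ψ (x ∘ ⇑σ) = ((Equiv.Perm.sign σ : ℤ) : ℂ) * ψ x} ∧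
      IsClosed (A : Set (Lp ℂ 2 (volume : Measure (Fin N → Fin d → ℝ)))) ∧
      ∃ e : A ≃ₗᵢ[ℂ] Lp ℂ 2 ((volume : Measure (Fin N → Fin d → ℝ)).restrict D),
        ∀ ψ : A, e ψ = ((Real.sqrt N.factorial : ℝ) : ℂ) •
          MemLp.toLp ⇑(ψ : Lp ℂ 2 (volume : Measure (Fin N → Fin d → ℝ)))
            ((Lp.memLp (ψ : Lp ℂ 2 (volume : Measure (Fin N → Fin d → ℝ)))).restrict D) := by
  let signChar : Equiv.Perm (Fin N) →* ℂ :=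
    (Int.castRingHom ℂ).toMonoidHom.comp ((Units.coeHom ℤ).comp Equiv.Perm.sign)
  refine ⟨isotypicSubspace volume signChar, ?_, isClosed_isotypicSubspace signChar,
    .ofSurjective _ (hDfd.isotypicRestrictₗᵢ_surjective hDmeas signChar), fun ψ => ?_⟩
  · ext ψ
    -- `σ⁻¹ • x` unfolds to `x ∘ ⇑σ⁻¹⁻¹`, which is `x ∘ ⇑σ` up to structure eta
    exact mem_isotypicSubspace
  · rw [LinearIsometryEquiv.coe_ofSurjective, hDfd.isotypicRestrictₗᵢ_apply, Fintype.card_perm,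
      Fintype.card_fin]
    rfl

/-- The anti-symmetric subspace `𝒜` of `L²(volume, ℂ)` over `Fin N → (Fin d → ℝ)` is a
closed linear subspace, and `ψ ↦ √(N!) · (ψ restricted to a fundamental domain D)` is a
linear isometric bijection from `𝒜` onto `L²(volume.restrict D, ℂ)`. -/
theorem stmt_11 (N d : ℕ) (hN : 1 ≤ N) (hd : 1 ≤ d)
    (D : Set (Fin N → Fin d → ℝ)) (hDmeas : MeasurableSet D)
    (hDfd : IsFundamentalDomain (Equiv.Perm (Fin N)) D
      (volume : Measure (Fin N → Fin d → ℝ))) :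
    ∃ A : Submodule ℂ (Lp ℂ 2 (volume : Measure (Fin N → Fin d → ℝ))),
      (A : Set (Lp ℂ 2 (volume : Measure (Fin N → Fin d → ℝ))))
        = {ψ : Lp ℂ 2 (volume : Measure (Fin N → Fin d → ℝ)) |
            ∀ σ : Equiv.Perm (Fin N), ∀ᵐ x ∂(volume : Measure (Fin N → Fin d → ℝ)),
              ψ (x ∘ ⇑σ) = ((Equiv.Perm.sign σ : ℤ) : ℂ) * ψ x} ∧
      IsClosed (A : Set (Lp ℂ 2 (volume : Measure (Fin N → Fin d → ℝ)))) ∧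
      ∃ e : A ≃ₗᵢ[ℂ] Lp ℂ 2 ((volume : Measure (Fin N → Fin d → ℝ)).restrict D),
        ∀ ψ : A, e ψ = ((Real.sqrt N.factorial : ℝ) : ℂ) •
          MemLp.toLp ⇑(ψ : Lp ℂ 2 (volume : Measure (Fin N → Fin d → ℝ)))
            ((Lp.memLp (ψ : Lp ℂ 2 (volume : Measure (Fin N → Fin d → ℝ)))).restrict D) :=
  stmt_11_general N d D hDmeas hDfd
end

section
/- Fix N ≥ 1 and d ≥ 1, equip Fin d → ℝ with the lexicographic linear order (Lex (Fin d → ℝ)), and let μ be Lebesgue measure on Fin N → (Fin d → ℝ). Then the open lexicographic chamber D := {x : Fin N → (Fin d → ℝ) | x is strictly increasing with respect to the lexicographic order, i.e., i < j implies x i <lex x j} is a measurable set which is a fundamental domain (MeasureTheory.IsFundamentalDomain) for the action of S_N on (Fin N → Fin d → ℝ, μ) given by σ • x = x ∘ σ⁻¹. -/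
open MeasureTheory

/-!
Off the diagonals `{x | x i = x j}`, which are proper linear subspaces and hence Lebesgue-null,
the points `x i` are pairwise distinct. Sorting them lexicographically then yields exactly one
permutation moving `x` into the open chamber.
-/

open Function Set MeasureTheory

section Sorting

variable {N : ℕ} {α : Type*} [LinearOrder α]

theorem Equiv.Perm.exists_strictMono_smul {y : Fin N → α} (hy : Injective y) :
    ∃ σ : Equiv.Perm (Fin N), StrictMono (σ • y) := by
  refine ⟨(Tuple.sort y)⁻¹, ?_⟩
  change StrictMono (y ∘ ⇑(Tuple.sort y)⁻¹⁻¹)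
  rw [inv_inv]
  exact (Tuple.monotone_sort y).strictMono_of_injective (hy.comp (Tuple.sort y).injective)

theorem Equiv.Perm.eq_of_strictMono_smul {y : Fin N → α} {σ τ : Equiv.Perm (Fin N)}
    (hσ : StrictMono (σ • y)) (hτ : StrictMono (τ • y)) : σ = τ := by
  have hy : Injective y := fun a b hab => by
    have : (σ • y) (σ a) = (σ • y) (σ b) := by
      change y (σ⁻¹ (σ a)) = y (σ⁻¹ (σ b))
      simpa using hab
    simpa using hσ.injective this
  have h : y ∘ ⇑σ⁻¹ = y ∘ ⇑τ⁻¹ := Tuple.unique_monotone hσ.monotone hτ.monotone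
  exact inv_injective <| Equiv.ext fun i => hy (congrFun h i)

end Sorting

section Measurability

variable {Ω ι β : Type*} [MeasurableSpace Ω] [Countable ι] [LinearOrder β]
  [TopologicalSpace β] [OrderClosedTopology β] [SecondCountableTopology β] [MeasurableSpace β]
  [OpensMeasurableSpace β]

theorem measurableSet_toLex_lt [LT ι] {f g : Ω → ι → β} (hf : Measurable f)
    (hg : Measurable g) : MeasurableSet {ω | toLex (f ω) < toLex (g ω)} := by
  have hcoord (i : ι) : Measurable fun ω => f ω i := (measurable_pi_apply i).comp hf
  have hcoord' (i : ι) : Measurable fun ω => g ω i := (measurable_pi_apply i).comp hg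
  have hlex : {ω | toLex (f ω) < toLex (g ω)} =
      ⋃ i, (⋂ j, ⋂ (_ : j < i), ({ω | f ω j ≤ g ω j} ∩ {ω | g ω j ≤ f ω j})) ∩
        {ω | f ω i < g ω i} := by
    ext ω
    simp only [mem_ofPred_eq, mem_iUnion, mem_inter_iff, mem_iInter, ← le_antisymm_iff]
    rfl
  rw [hlex]
  exact .iUnion fun i => .inter (.iInter fun j => .iInter fun _ =>
    (measurableSet_le (hcoord j) (hcoord' j)).inter (measurableSet_le (hcoord' j) (hcoord j)))
    (measurableSet_lt (hcoord i) (hcoord' i))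

theorem measurableSet_setOf_strictMono_toLex [LinearOrder ι] [WellFoundedLT ι] {κ : Type*}
    [Countable κ] [Preorder κ] :
    MeasurableSet {x : κ → ι → β | StrictMono fun k => toLex (x k)} := by
  simp only [StrictMono, ofPred_forall]
  exact .iInter fun k => .iInter fun l => .iInter fun _ =>
    measurableSet_toLex_lt (measurable_pi_apply k) (measurable_pi_apply l)

end Measurability

theorem MeasureTheory.Measure.addHaar_ae_injective {ι E : Type*} [Fintype ι]
    [NormedAddCommGroup E] [NormedSpace ℝ E] [MeasurableSpace E] [BorelSpace E]
    [FiniteDimensional ℝ E] [Nontrivial E]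
    (μ : Measure (ι → E)) [μ.IsAddHaarMeasure] : ∀ᵐ x ∂μ, Injective x := by
  classical
  have hdiag {i j : ι} (hij : i ≠ j) : μ {x | x i = x j} = 0 := by
    obtain ⟨v, hv⟩ := exists_ne (0 : E)
    convert Measure.addHaar_submodule μ
      (LinearMap.ker (LinearMap.proj (R := ℝ) (φ := fun _ : ι => E) i - LinearMap.proj j))
      fun htop => hv (by simpa [hij.symm] using Submodule.eq_top_iff'.1 htop (Pi.single i v))
    ext x
    simp [sub_eq_zero]
  have hnoninj : {x : ι → E | ¬Injective x} = ⋃ (i) (j) (_ : i ≠ j), {x | x i = x j} := by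
    ext x
    simp [Injective, and_comm]
  rw [ae_iff, hnoninj]
  exact measure_iUnion_null fun i => measure_iUnion_null fun j => measure_iUnion_null hdiag

theorem MeasureTheory.isFundamentalDomain_setOf_strictMono {N : ℕ} {X α : Type*}
    [LinearOrder α] [MeasurableSpace X] {μ : Measure (Fin N → X)} {f : X → α}
    (hf : Injective f)
    (hs : NullMeasurableSet {x : Fin N → X | StrictMono fun i => f (x i)} μ)
    (hμ : ∀ᵐ x ∂μ, Injective x) :
    IsFundamentalDomain (Equiv.Perm (Fin N))
      {x : Fin N → X | StrictMono fun i => f (x i)} μ where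
  nullMeasurableSet := hs
  ae_covers := by
    filter_upwards [hμ] with x hx
    exact Equiv.Perm.exists_strictMono_smul (hf.comp hx)
  aedisjoint σ τ hστ := by
    refine measure_mono_null ?_ (ae_iff.1 hμ)
    rintro x ⟨hσ, hτ⟩ -
    rw [mem_smul_set_iff_inv_smul_mem] at hσ hτ
    exact hστ (inv_injective (Equiv.Perm.eq_of_strictMono_smul (y := f ∘ x) hσ hτ))

theorem stmt_14_general (N d : ℕ) (hd : 1 ≤ d) :
    MeasurableSet {x : Fin N → Fin d → ℝ | StrictMono fun i => toLex (x i)} ∧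
    IsFundamentalDomain (Equiv.Perm (Fin N))
      {x : Fin N → Fin d → ℝ | StrictMono fun i => toLex (x i)}
      (volume : Measure (Fin N → Fin d → ℝ)) := by
  have : NeZero d := ⟨by omega⟩
  -- instance search does not get through the iterated product on its own
  have : (volume : Measure (Fin N → Fin d → ℝ)).IsAddHaarMeasure :=
    Measure.pi.isAddHaarMeasure _
  have hs := measurableSet_setOf_strictMono_toLex (ι := Fin d) (β := ℝ) (κ := Fin N)
  exact ⟨hs, isFundamentalDomain_setOf_strictMono toLex.injective hs.nullMeasurableSet
    (Measure.addHaar_ae_injective _)⟩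

/-- For `N ≥ 1` and `d ≥ 1`, the open lexicographic chamber, consisting of the tuples
`x : Fin N → (Fin d → ℝ)` that are strictly increasing with respect to the lexicographic
order on `Fin d → ℝ`, is a measurable set which is a fundamental domain for the action
`σ • x = x ∘ σ⁻¹` of `S_N` on `(Fin N → Fin d → ℝ, volume)`. -/
theorem stmt_14 (N d : ℕ) (hN : 1 ≤ N) (hd : 1 ≤ d) :
    MeasurableSet {x : Fin N → Fin d → ℝ | StrictMono fun i => toLex (x i)} ∧
    IsFundamentalDomain (Equiv.Perm (Fin N))
      {x : Fin N → Fin d → ℝ | StrictMono fun i => toLex (x i)}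
      (volume : Measure (Fin N → Fin d → ℝ)) :=
  stmt_14_general N d hd
end
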